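/- Characterization of Enneper's surface (Chern–Ricci constant, V = (0,0,−1)): let U ⊆ ℂ be a nonempty connected open set, let (f, g) be Weierstrass data on U, and let X : U → ℝ³ satisfy ∂X/∂x = Re Φ and ∂X/∂y = −Im Φ on U, where Φ = (f(1 − g²)/2, i f(1 + g²)/2, f g). Assume there is a constant c > 0 with |f(z)| = c |g'(z)| for all z ∈ U (i.e. the Chern–Ricci function for V = (0, 0, −1), which equals ln(|f|/|g'|), is constant on U). Then X is a piece of Enneper's surface up to isometries and homotheties of ℝ³: there exist s > 0, a linear isometry A of ℝ³, a vector b ∈ ℝ³, and a holomorphic map φ : U → ℂ such that X(z) = s·A(E(φ(z))) + b for all z ∈ U, where E : ℂ → ℝ³ is Enneper's parametrization E(w) = (Re(w − w³/3), Re(i(w + w³/3)), Re(w²)). -/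

import Mathlib

/-!
Since `f / g'` is holomorphic with constant modulus `c` on the connected set `U`, it is a constant
`c ω²` with `|ω| = 1`. Enneper's parametrization is the real part of the holomorphic curve
`Ê(w) = (w - w³/3, i(w + w³/3), w²)`, and a direct computation shows that `Φ` is the complex
derivative of `(c/2) R Ê(ω g)`, where `R` is the rotation by `ω̄` about the third axis. Hence `X` and
`(c/2) R E(ω g)` have the same differential on `U`, so they differ by a constant vector.
-/

noncomputable def enneper (w : ℂ) : EuclideanSpace ℝ (Fin 3) :=
  (WithLp.equiv 2 (Fin 3 → ℝ)).symm
    ![(w - w ^ 3 / 3).re, (Complex.I * (w + w ^ 3 / 3)).re, (w ^ 2).re]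

open Complex ComplexConjugate Matrix Set

lemma Complex.continuousLinearMap_ext {E : Type*} [NormedAddCommGroup E] [NormedSpace ℝ E]
    {L₁ L₂ : ℂ →L[ℝ] E} (h1 : L₁ 1 = L₂ 1) (hI : L₁ I = L₂ I) : L₁ = L₂ :=
  ContinuousLinearMap.coe_injective <| basisOneI.ext fun i => by
    fin_cases i <;> simpa

section RealPart

variable {ι : Type*}

variable (ι) in
noncomputable def reEuclidean : (ι → ℂ) →L[ℝ] EuclideanSpace ℝ ι :=
  (EuclideanSpace.equiv ι ℝ).symm.toContinuousLinearMap ∘L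
    ContinuousLinearMap.pi fun i => reCLM ∘L ContinuousLinearMap.proj i

lemma reEuclidean_apply (v : ι → ℂ) :
    reEuclidean ι v = (WithLp.equiv 2 (ι → ℝ)).symm fun i => (v i).re :=
  rfl

variable [Fintype ι]

lemma HasDerivAt.hasFDerivAt_reEuclidean {H : ℂ → ι → ℂ} {H' : ι → ℂ} {z : ℂ}
    (h : HasDerivAt H H' z) :
    HasFDerivAt (fun t => reEuclidean ι (H t))
      ((reEuclidean ι).comp ((ContinuousLinearMap.toSpanSingleton ℂ H').restrictScalars ℝ)) z :=
  (reEuclidean ι).hasFDerivAt.comp z (h.hasFDerivAt.restrictScalars ℝ)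

lemma eq_reEuclidean_comp_toSpanSingleton {L : ℂ →L[ℝ] EuclideanSpace ℝ ι} {v : ι → ℂ}
    (h1 : L 1 = (WithLp.equiv 2 (ι → ℝ)).symm fun i => (v i).re)
    (hI : L I = (WithLp.equiv 2 (ι → ℝ)).symm fun i => -(v i).im) :
    L = (reEuclidean ι).comp ((ContinuousLinearMap.toSpanSingleton ℂ v).restrictScalars ℝ) := by
  refine Complex.continuousLinearMap_ext ?_ ?_
  · simp [h1, reEuclidean_apply]
  · simp [hI, reEuclidean_apply]

variable [DecidableEq ι]

noncomputable def orthogonalIsometry (R : orthogonalGroup ι ℝ) :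
    EuclideanSpace ℝ ι ≃ₗᵢ[ℝ] EuclideanSpace ℝ ι :=
  Unitary.linearIsometryEquiv
    ⟨toEuclideanCLM (n := ι) (𝕜 := ℝ) R, Unitary.map_mem _ R.2⟩

lemma orthogonalIsometry_reEuclidean (R : orthogonalGroup ι ℝ) (v : ι → ℂ) :
    orthogonalIsometry R (reEuclidean ι v) =
      reEuclidean ι ((R : Matrix ι ι ℝ).map ofReal *ᵥ v) := by
  change toEuclideanCLM (n := ι) (𝕜 := ℝ) R (reEuclidean ι v) = _
  ext i
  simp [reEuclidean_apply, mulVec, dotProduct, re_sum]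

end RealPart

def rotationZ (u : ℂ) (hu : ‖u‖ = 1) : orthogonalGroup (Fin 3) ℝ :=
  ⟨!![u.re, -u.im, 0; u.im, u.re, 0; 0, 0, 1], by
    have h : u.re * u.re + u.im * u.im = 1 := by
      rw [← normSq_apply, normSq_eq_norm_sq, hu, one_pow]
    rw [mem_orthogonalGroup_iff]
    ext i j
    fin_cases i <;> fin_cases j <;> simp [mul_apply, Fin.sum_univ_three] <;> linarith⟩

noncomputable def enneperCurve (w : ℂ) : Fin 3 → ℂ :=
  ![w - w ^ 3 / 3, I * (w + w ^ 3 / 3), w ^ 2]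

def enneperCurveDeriv (w : ℂ) : Fin 3 → ℂ :=
  ![1 - w ^ 2, I * (1 + w ^ 2), 2 * w]

lemma enneper_eq_reEuclidean (w : ℂ) : enneper w = reEuclidean (Fin 3) (enneperCurve w) := by
  rw [reEuclidean_apply, enneper]
  congr 1
  ext i
  fin_cases i <;> rfl

lemma hasDerivAt_enneperCurve (w : ℂ) : HasDerivAt enneperCurve (enneperCurveDeriv w) w := by
  have hcube : HasDerivAt (fun x : ℂ => x ^ 3 / 3) (w ^ 2) w := by
    simpa using (hasDerivAt_pow 3 w).div_const 3
  refine hasDerivAt_pi.2 fun i => ?_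
  fin_cases i
  · exact (hasDerivAt_id w).sub hcube
  · exact ((hasDerivAt_id w).add hcube).const_mul I
  · simpa [enneperCurve, enneperCurveDeriv] using hasDerivAt_pow 2 w

lemma hasFDerivAt_smul_orthogonalIsometry_enneper_comp (s : ℝ) (R : orthogonalGroup (Fin 3) ℝ)
    {φ : ℂ → ℂ} {φ' z : ℂ} (hφ : HasDerivAt φ φ' z) :
    HasFDerivAt (fun t => s • orthogonalIsometry R (enneper (φ t)))
      ((reEuclidean (Fin 3)).comp ((ContinuousLinearMap.toSpanSingleton ℂ
        (s • ((R : Matrix (Fin 3) (Fin 3) ℝ).map ofReal *ᵥ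
          (φ' • enneperCurveDeriv (φ z))))).restrictScalars ℝ)) z := by
  set M := (R : Matrix (Fin 3) (Fin 3) ℝ).map ofReal
  have hcurve : HasDerivAt (fun t => s • (M *ᵥ enneperCurve (φ t)))
      (s • (M *ᵥ (φ' • enneperCurveDeriv (φ z)))) z :=
    ((mulVecLin M).toContinuousLinearMap.hasFDerivAt.comp_hasDerivAt z
      ((hasDerivAt_enneperCurve (φ z)).scomp z hφ)).const_smul s
  convert hcurve.hasFDerivAt_reEuclidean using 2 with t
  rw [enneper_eq_reEuclidean, orthogonalIsometry_reEuclidean, map_smul]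

lemma smul_rotationZ_conj_mulVec_enneperCurveDeriv {ω F G G' : ℂ} {c : ℝ} (hω : ‖ω‖ = 1)
    (hF : F = c * ω ^ 2 * G') :
    (c / 2 : ℝ) • ((rotationZ (conj ω) ((norm_conj ω).trans hω) : Matrix (Fin 3) (Fin 3) ℝ).map
        ofReal *ᵥ ((ω * G') • enneperCurveDeriv (ω * G))) =
      ![F * (1 - G ^ 2) / 2, I * F * (1 + G ^ 2) / 2, F * G] := by
  have hre : (ω.re : ℂ) = (ω + conj ω) / 2 := re_eq_add_conj ω
  have him : (ω.im : ℂ) = (conj ω - ω) * I / 2 := by apply Complex.ext <;> simp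
  have hnorm : ω * conj ω = 1 := by rw [mul_conj, normSq_eq_norm_sq, hω]; simp
  ext i
  fin_cases i <;>
    simp [rotationZ, enneperCurveDeriv, mulVec, dotProduct, Fin.sum_univ_three, real_smul, hre, him]
  · linear_combination (-(1 - G ^ 2) / 2) * hF - (c / 2 * G' * ω ^ 2 * G ^ 2) * hnorm
      + (c * (conj ω - ω) * ω * G' * (1 + ω ^ 2 * G ^ 2) / 4) * I_sq
  · linear_combination (-I * (1 + G ^ 2) / 2) * hF + (c / 2 * I * G' * ω ^ 2 * G ^ 2) * hnorm
  · linear_combination -G * hF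

lemma exists_eq_const_mul_of_norm_eq_mul_norm {U : Set ℂ} (hU : IsOpen U)
    (hUc : IsPreconnected U) {z₀ : ℂ} (hz₀ : z₀ ∈ U) {p q : ℂ → ℂ}
    (hp : DifferentiableOn ℂ p U) (hq : DifferentiableOn ℂ q U) (hq0 : ∀ z ∈ U, q z ≠ 0) {c : ℝ}
    (hpq : ∀ z ∈ U, ‖p z‖ = c * ‖q z‖) : ∃ a : ℂ, ‖a‖ = c ∧ ∀ z ∈ U, p z = a * q z := by
  have hnorm : ∀ z ∈ U, ‖p z / q z‖ = c := fun z hz => by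
    rw [norm_div, hpq z hz, mul_div_cancel_right₀ _ (norm_ne_zero_iff.2 (hq0 z hz))]
  have hconst := eqOn_of_isPreconnected_of_isMaxOn_norm hUc hU (hp.div hq hq0) hz₀
    fun z hz => ((hnorm z hz).trans (hnorm z₀ hz₀).symm).le
  exact ⟨p z₀ / q z₀, hnorm z₀ hz₀, fun z hz => (div_eq_iff (hq0 z hz)).1 (hconst hz)⟩

lemma exists_norm_eq_one_and_eq_norm_mul_sq (a : ℂ) : ∃ ω : ℂ, ‖ω‖ = 1 ∧ a = ‖a‖ * ω ^ 2 := by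
  refine ⟨exp ((a.arg / 2 : ℝ) * I), norm_exp_ofReal_mul_I _, ?_⟩
  rw [← exp_nat_mul]
  push_cast
  nth_rw 1 [← norm_mul_exp_arg_mul_I a]
  ring_nf

theorem enneper_characterization_chern_ricci_constant_south_general
    (U : Set ℂ) (hU : IsOpen U) (hUconn : IsConnected U)
    (f g : ℂ → ℂ)
    (hf : DifferentiableOn ℂ f U) (hg : DifferentiableOn ℂ g U)
    (hg' : ∀ z ∈ U, deriv g z ≠ 0)
    (Φ : ℂ → Fin 3 → ℂ)
    (hΦ : ∀ z, Φ z = ![f z * (1 - g z ^ 2) / 2,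
                        Complex.I * f z * (1 + g z ^ 2) / 2,
                        f z * g z])
    (X : ℂ → EuclideanSpace ℝ (Fin 3))
    (hXdiff : ∀ z ∈ U, DifferentiableAt ℝ X z)
    (hXx : ∀ z ∈ U, fderiv ℝ X z 1 =
      (WithLp.equiv 2 (Fin 3 → ℝ)).symm (fun i => (Φ z i).re))
    (hXy : ∀ z ∈ U, fderiv ℝ X z Complex.I =
      (WithLp.equiv 2 (Fin 3 → ℝ)).symm (fun i => -(Φ z i).im))
    (c : ℝ) (hc : 0 < c)
    (hconst : ∀ z ∈ U, ‖f z‖ = c * ‖deriv g z‖) :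
    ∃ (s : ℝ) (A : EuclideanSpace ℝ (Fin 3) ≃ₗᵢ[ℝ] EuclideanSpace ℝ (Fin 3))
      (b : EuclideanSpace ℝ (Fin 3)) (φ : ℂ → ℂ),
      0 < s ∧ DifferentiableOn ℂ φ U ∧
      ∀ z ∈ U, X z = s • A (enneper (φ z)) + b := by
  obtain ⟨z₀, hz₀⟩ := hUconn.nonempty
  obtain ⟨a, ha, hfa⟩ := exists_eq_const_mul_of_norm_eq_mul_norm hU hUconn.isPreconnected hz₀ hf
    (hg.analyticOnNhd hU).deriv.differentiableOn hg' hconst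
  obtain ⟨ω, hω, haω⟩ := exists_norm_eq_one_and_eq_norm_mul_sq a
  rw [ha] at haω
  set A := orthogonalIsometry (rotationZ (conj ω) ((norm_conj ω).trans hω))
  have hY : ∀ z ∈ U, HasFDerivAt (fun t => (c / 2) • A (enneper (ω * g t))) (fderiv ℝ X z) z := by
    intro z hz
    convert hasFDerivAt_smul_orthogonalIsometry_enneper_comp (c / 2) _
      (((hg.differentiableAt (hU.mem_nhds hz)).hasDerivAt).const_mul ω) using 1
    rw [eq_reEuclidean_comp_toSpanSingleton (hXx z hz) (hXy z hz), hΦ z,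
      smul_rotationZ_conj_mulVec_enneperCurveDeriv (F := f z) hω (by rw [hfa z hz, haω])]
  obtain ⟨b, hb⟩ := hU.exists_eq_add_of_fderiv_eq hUconn.isPreconnected
    (fun z hz => (hXdiff z hz).differentiableWithinAt)
    (fun z hz => (hY z hz).differentiableAt.differentiableWithinAt)
    (fun z hz => (hY z hz).fderiv.symm)
  exact ⟨c / 2, A, b, (ω * g ·), half_pos hc, hg.const_mul ω, fun z hz => hb hz⟩

/-- Characterization of Enneper's surface; Chern–Ricci constant
for `V = (0,0,−1)`: let `U ⊆ ℂ` be a nonempty connected open set, `(f, g)`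
Weierstrass data on `U`, and `X : U → ℝ³` with `∂X/∂x = Re Φ`, `∂X/∂y = −Im Φ`
where `Φ = (f(1 − g²)/2, i f(1 + g²)/2, f g)`.  If there is a constant `c > 0`
with `|f| = c|g'|` on `U` (i.e. the Chern–Ricci function for `V = (0,0,−1)`,
which equals `ln(|f|/|g'|)`, is constant), then `X` is a piece of Enneper's
surface up to isometries and homotheties of `ℝ³`. -/
theorem enneper_characterization_chern_ricci_constant_south
    (U : Set ℂ) (hU : IsOpen U) (hUconn : IsConnected U)
    (f g : ℂ → ℂ)
    (hf : DifferentiableOn ℂ f U) (hg : DifferentiableOn ℂ g U)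
    (hf0 : ∀ z ∈ U, f z ≠ 0) (hg' : ∀ z ∈ U, deriv g z ≠ 0)
    (Φ : ℂ → Fin 3 → ℂ)
    (hΦ : ∀ z, Φ z = ![f z * (1 - g z ^ 2) / 2,
                        Complex.I * f z * (1 + g z ^ 2) / 2,
                        f z * g z])
    (X : ℂ → EuclideanSpace ℝ (Fin 3))
    (hXdiff : ∀ z ∈ U, DifferentiableAt ℝ X z)
    (hXx : ∀ z ∈ U, fderiv ℝ X z 1 =
      (WithLp.equiv 2 (Fin 3 → ℝ)).symm (fun i => (Φ z i).re))
    (hXy : ∀ z ∈ U, fderiv ℝ X z Complex.I =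
      (WithLp.equiv 2 (Fin 3 → ℝ)).symm (fun i => -(Φ z i).im))
    (c : ℝ) (hc : 0 < c)
    (hconst : ∀ z ∈ U, ‖f z‖ = c * ‖deriv g z‖) :
    ∃ (s : ℝ) (A : EuclideanSpace ℝ (Fin 3) ≃ₗᵢ[ℝ] EuclideanSpace ℝ (Fin 3))
      (b : EuclideanSpace ℝ (Fin 3)) (φ : ℂ → ℂ),
      0 < s ∧ DifferentiableOn ℂ φ U ∧
      ∀ z ∈ U, X z = s • A (enneper (φ z)) + b :=
  enneper_characterization_chern_ricci_constant_south_general U hU hUconn f g hf hg hg' Φ hΦ X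
    hXdiff hXx hXy c hc hconst
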